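/- Let A be a unital associative algebra over a field k with 1/2 ∈ k. Suppose A is generated as an associative k-algebra by a finite set S containing 1. Then the Jordan algebra A^(+) with product a ∘ b = (1/2)(ab + ba) is generated as a Jordan algebra by the finite set of all products of at most two elements of S (i.e., S ∪ {st : s, t ∈ S}). -/
import Mathlib


/-- Weak form of Osborn's theorem: if the unital associative algebra A is
generated by a finite set S containing 1, then A⁽⁺⁾ is generated as a
Jordan algebra by S together with all products of two elements of S. -/
theorem plus_finitely_generated {k A : Type*} [Field k] [Ring A] [Algebra k A]
    [Invertible (2 : k)] (S : Finset A) (h1 : (1 : A) ∈ S)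
    (hgen : Algebra.adjoin k (↑S : Set A) = ⊤) :
    ∀ T : Submodule k A,
      ((↑S : Set A) ∪ {x : A | ∃ s ∈ S, ∃ t ∈ S, x = s * t}) ⊆ ↑T →
      (∀ a ∈ T, ∀ b ∈ T, (⅟(2:k)) • (a * b + b * a) ∈ T) → T = ⊤ := by
  intro T hsub hJ
  have hS : ∀ s ∈ S, s ∈ T := fun s hs => hsub (Or.inl hs)
  have hS2 : ∀ s ∈ S, ∀ t ∈ S, s * t ∈ T := fun s hs t ht =>
    hsub (Or.inr ⟨s, hs, t, ht, rfl⟩)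
  -- key triple identity: if x, a*x, x*b, b*a ∈ T then a*x*b ∈ T
  have tri : ∀ a b x : A, a ∈ T → b ∈ T → x ∈ T →
      a * x ∈ T → x * b ∈ T → b * a ∈ T → a * x * b ∈ T := by
    intro a b x ha hb hx hax hxb hba
    have h1 := hJ a ha (x * b) hxb
    have h2 := hJ b hb (a * x) hax
    have h3 := hJ (b * a) hba x hx
    have key : (⅟(2:k)) • (a * (x * b) + (x * b) * a)
        + (⅟(2:k)) • (b * (a * x) + (a * x) * b)
        - (⅟(2:k)) • ((b * a) * x + x * (b * a)) = a * x * b := by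
      rw [← smul_add, ← smul_sub]
      have h4 : (a * (x * b) + (x * b) * a) + (b * (a * x) + (a * x) * b)
          - ((b * a) * x + x * (b * a)) = (2:k) • (a * x * b) := by
        rw [two_smul]; noncomm_ring
      rw [h4, smul_smul, invOf_mul_self, one_smul]
    rw [← key]
    exact T.sub_mem (T.add_mem h1 h2) h3
  -- every product of a list of elements of S lies in T
  have words : ∀ n : ℕ, ∀ l : List A, l.length = n → (∀ y ∈ l, y ∈ S) →
      l.prod ∈ T := by
    intro n
    induction n using Nat.strong_induction_on with
    | _ n ih =>
      intro l hl hmem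
      match l with
      | [] => simpa using hS 1 h1
      | [s] => simpa using hS s (hmem s (by simp))
      | s :: (y :: l') =>
        rcases List.eq_nil_or_concat (y :: l') with h | ⟨m, t, hmt⟩
        · simp at h
        · rw [hmt] at hl hmem ⊢
          simp [List.length_concat] at hl
          have hsS : s ∈ S := hmem s (by simp)
          have htS : t ∈ S := hmem t (by simp)
          have hmS : ∀ y ∈ m, y ∈ S := fun y hy => hmem y (by simp [hy])
          have hm : m.prod ∈ T := by
            refine ih m.length ?_ m rfl hmS
            omega
          have hsm : (s :: m).prod ∈ T := by
            refine ih (m.length + 1) ?_ (s :: m) (by simp) ?_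
            · omega
            · intro y hy
              rcases List.mem_cons.mp hy with h | h
              · exact h ▸ hsS
              · exact hmS y h
          have hmt' : (m.concat t).prod ∈ T := by
            refine ih (m.length + 1) ?_ (m.concat t) (by simp) ?_
            · omega
            · intro y hy
              rw [List.concat_eq_append, List.mem_append] at hy
              rcases hy with h | h
              · exact hmS y h
              · simp at h; exact h ▸ htS
          have hts : t * s ∈ T := hS2 t htS s hsS
          have := tri s t m.prod (hS s hsS) (hS t htS) hm
            (by simpa using hsm) (by simpa [List.concat_eq_append] using hmt') hts
          simpa [List.concat_eq_append, mul_assoc] using this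
  -- conclude via the span characterization of adjoin
  have hclosure : (Submonoid.closure (↑S : Set A) : Set A) ⊆ ↑T := by
    intro x hx
    obtain ⟨l, hlS, hlp⟩ := Submonoid.exists_list_of_mem_closure hx
    exact hlp ▸ words l.length l rfl hlS
  rw [eq_top_iff]
  intro x _
  have hx : x ∈ Algebra.adjoin k (↑S : Set A) := hgen ▸ Algebra.mem_top
  have hx' : x ∈ Submodule.span k ((Submonoid.closure (↑S : Set A) : Set A)) := by
    rw [← Algebra.adjoin_eq_span]; exact hx
  exact Submodule.span_le.mpr hclosure hx'
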